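/- arXiv:2604.27469 — 2 statements merged into one kernel-verified Lean document; each statement's English description precedes it below -/
import Mathlib

section
/- Let d > 0, let ε > 0 and ρ > 0 satisfy ρ ≤ 2ε and 3ε ≤ 2d, and let ω : ℝ → ℝ be nonnegative and nondecreasing on (0, 2d]. Then ρ·∫_{ρ}^{2d} ω(η)/η² dη ≤ 8·ε·∫_{2ε}^{2d} ω(η)/η² dη. -/
open Set intervalIntegral

/-- If `d > 0`, `ε > 0`, `ρ > 0` with `ρ ≤ 2ε` and `3ε ≤ 2d`, and `ω : ℝ → ℝ`
is nonnegative and nondecreasing on `(0, 2d]`, then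
`ρ·∫_ρ^{2d} ω(η)/η² dη ≤ 8·ε·∫_{2ε}^{2d} ω(η)/η² dη`. -/
theorem weighted_integral_estimate
    (d ε ρ : ℝ) (hd : 0 < d) (hε : 0 < ε) (hρ : 0 < ρ)
    (hρε : ρ ≤ 2 * ε) (hεd : 3 * ε ≤ 2 * d)
    (ω : ℝ → ℝ)
    (hω_nonneg : ∀ η ∈ Set.Ioc (0 : ℝ) (2 * d), 0 ≤ ω η)
    (hω_mono : ∀ x ∈ Set.Ioc (0 : ℝ) (2 * d), ∀ y ∈ Set.Ioc (0 : ℝ) (2 * d),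
      x ≤ y → ω x ≤ ω y) :
    ρ * ∫ η in ρ..(2 * d), ω η / η ^ 2 ≤ 8 * ε * ∫ η in (2 * ε)..(2 * d), ω η / η ^ 2 := by
  have h23 : 2 * ε ≤ 3 * ε := by linarith
  have hρ2d : ρ ≤ 2 * d := by linarith
  have h2ε2d : 2 * ε ≤ 2 * d := by linarith
  have hcont : ∀ (C u v : ℝ), 0 < u → u ≤ v →
      IntervalIntegrable (fun η : ℝ => C / η ^ 2) MeasureTheory.volume u v := by
    intro C u v hu huv
    apply ContinuousOn.intervalIntegrable
    apply ContinuousOn.div continuousOn_const (by fun_prop)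
    intro x hx
    rw [Set.uIcc_of_le huv] at hx
    exact pow_ne_zero _ (ne_of_gt (lt_of_lt_of_le hu hx.1))
  have hInt : ∀ u v : ℝ, 0 < u → u ≤ v → v ≤ 2 * d →
      IntervalIntegrable (fun η => ω η / η ^ 2) MeasureTheory.volume u v := by
    intro u v hu huv hv
    have h1 : MonotoneOn ω (Set.uIcc u v) := by
      intro x hx y hy hxy
      rw [Set.uIcc_of_le huv] at hx hy
      exact hω_mono x ⟨lt_of_lt_of_le hu hx.1, hx.2.trans hv⟩
        y ⟨lt_of_lt_of_le hu hy.1, hy.2.trans hv⟩ hxy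
    have h3 : ContinuousOn (fun η : ℝ => (η ^ 2)⁻¹) (Set.uIcc u v) := by
      apply ContinuousOn.inv₀ (by fun_prop)
      intro x hx
      rw [Set.uIcc_of_le huv] at hx
      exact pow_ne_zero _ (ne_of_gt (lt_of_lt_of_le hu hx.1))
    simpa [div_eq_mul_inv] using h1.intervalIntegrable.mul_continuousOn h3
  have hcalc : ∀ (C a b : ℝ), 0 < a → a ≤ b →
      ∫ η in a..b, C / η ^ 2 = C * (a⁻¹ - b⁻¹) := by
    intro C a b ha hab
    have h0 : (0 : ℝ) ∉ Set.uIcc a b := by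
      rw [Set.uIcc_of_le hab]
      exact fun h => absurd h.1 (not_le.2 ha)
    have hrw : ∀ η : ℝ, C / η ^ 2 = C * η ^ (-2 : ℤ) := by
      intro η
      rw [div_eq_mul_inv]
      congr 1
    simp only [hrw]
    rw [intervalIntegral.integral_const_mul, integral_zpow (Or.inr ⟨by norm_num, h0⟩)]
    have hb : b ≠ 0 := fun h => h0 (h ▸ Set.right_mem_uIcc)
    have ha' : a ≠ 0 := ne_of_gt ha
    norm_num [zpow_neg]
    rw [div_neg, div_one, neg_sub]
    exact Or.inl rfl
  set f : ℝ → ℝ := fun η => ω η / η ^ 2 with hf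
  have hI1 : IntervalIntegrable f MeasureTheory.volume ρ (2 * ε) := hInt _ _ hρ hρε h2ε2d
  have hI2 : IntervalIntegrable f MeasureTheory.volume (2 * ε) (2 * d) :=
    hInt _ _ (by linarith) h2ε2d le_rfl
  have hI3 : IntervalIntegrable f MeasureTheory.volume (2 * ε) (3 * ε) :=
    hInt _ _ (by linarith) h23 hεd
  have hI4 : IntervalIntegrable f MeasureTheory.volume (3 * ε) (2 * d) :=
    hInt _ _ (by linarith) hεd le_rfl
  have hω2ε_nonneg : 0 ≤ ω (2 * ε) := hω_nonneg _ ⟨by linarith, h2ε2d⟩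
  -- step 1 : ∫_ρ^{2ε} f ≤ ω(2ε)/ρ
  have step1 : ∫ η in ρ..(2 * ε), f η ≤ ω (2 * ε) / ρ := by
    have hmono : ∫ η in ρ..(2 * ε), f η ≤ ∫ η in ρ..(2 * ε), ω (2 * ε) / η ^ 2 := by
      apply intervalIntegral.integral_mono_on hρε hI1 (hcont _ _ _ hρ hρε)
      intro η hη
      have hηpos : 0 < η := lt_of_lt_of_le hρ hη.1
      have hle : ω η ≤ ω (2 * ε) :=
        hω_mono η ⟨hηpos, by linarith [hη.2]⟩ (2 * ε) ⟨by linarith, h2ε2d⟩ hη.2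
      have h2 : (0:ℝ) < η ^ 2 := by positivity
      show ω η / η ^ 2 ≤ ω (2 * ε) / η ^ 2
      gcongr
    calc ∫ η in ρ..(2 * ε), f η ≤ ω (2 * ε) * (ρ⁻¹ - (2 * ε)⁻¹) := by
          rw [← hcalc (ω (2 * ε)) ρ (2 * ε) hρ hρε]; exact hmono
      _ ≤ ω (2 * ε) / ρ := by
          rw [div_eq_mul_inv]
          have : (0:ℝ) < (2 * ε)⁻¹ := by positivity
          nlinarith
  -- step 2 : ω(2ε) ≤ 6ε * ∫_{2ε}^{2d} f
  have step2 : ω (2 * ε) ≤ 6 * ε * ∫ η in (2 * ε)..(2 * d), f η := by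
    have hlow : ∫ η in (2 * ε)..(3 * ε), ω (2 * ε) / η ^ 2 ≤ ∫ η in (2 * ε)..(3 * ε), f η := by
      apply intervalIntegral.integral_mono_on h23 (hcont _ _ _ (by linarith) h23) hI3
      intro η hη
      have hηpos : 0 < η := lt_of_lt_of_le (by linarith) hη.1
      have hle : ω (2 * ε) ≤ ω η :=
        hω_mono (2 * ε) ⟨by linarith, h2ε2d⟩ η ⟨hηpos, by linarith [hη.2]⟩ hη.1
      have h2 : (0:ℝ) < η ^ 2 := by positivity
      show ω (2 * ε) / η ^ 2 ≤ ω η / η ^ 2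
      gcongr
    have hval : ∫ η in (2 * ε)..(3 * ε), ω (2 * ε) / η ^ 2
        = ω (2 * ε) * ((2 * ε)⁻¹ - (3 * ε)⁻¹) := hcalc _ _ _ (by linarith) h23
    have hsplit : ∫ η in (2 * ε)..(2 * d), f η
        = (∫ η in (2 * ε)..(3 * ε), f η) + ∫ η in (3 * ε)..(2 * d), f η :=
      (intervalIntegral.integral_add_adjacent_intervals hI3 hI4).symm
    have htail : 0 ≤ ∫ η in (3 * ε)..(2 * d), f η := by
      apply intervalIntegral.integral_nonneg hεd
      intro η hη
      have hηpos : 0 < η := lt_of_lt_of_le (by linarith) hη.1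
      have : 0 ≤ ω η := hω_nonneg _ ⟨hηpos, hη.2⟩
      positivity
    have hεne : ε ≠ 0 := ne_of_gt hε
    have hkey : ω (2 * ε) * ((2 * ε)⁻¹ - (3 * ε)⁻¹) = ω (2 * ε) / (6 * ε) := by
      field_simp
      ring
    have h6 : ω (2 * ε) / (6 * ε) ≤ ∫ η in (2 * ε)..(2 * d), f η := by
      rw [hsplit]
      calc ω (2 * ε) / (6 * ε) = ∫ η in (2 * ε)..(3 * ε), ω (2 * ε) / η ^ 2 := by
            rw [hval, hkey]
        _ ≤ ∫ η in (2 * ε)..(3 * ε), f η := hlow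
        _ ≤ _ := by linarith
    have h6ε : (0:ℝ) < 6 * ε := by linarith
    calc ω (2 * ε) = 6 * ε * (ω (2 * ε) / (6 * ε)) := by field_simp
      _ ≤ 6 * ε * ∫ η in (2 * ε)..(2 * d), f η := by
          apply mul_le_mul_of_nonneg_left h6 (by linarith)
  -- nonneg of main integral
  have hInonneg : 0 ≤ ∫ η in (2 * ε)..(2 * d), f η := by
    apply intervalIntegral.integral_nonneg h2ε2d
    intro η hη
    have hηpos : 0 < η := lt_of_lt_of_le (by linarith) hη.1
    have : 0 ≤ ω η := hω_nonneg _ ⟨hηpos, hη.2⟩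
    positivity
  have hsplit2 : ∫ η in ρ..(2 * d), f η
      = (∫ η in ρ..(2 * ε), f η) + ∫ η in (2 * ε)..(2 * d), f η :=
    (intervalIntegral.integral_add_adjacent_intervals hI1 hI2).symm
  rw [hsplit2]
  have hA : ρ * ∫ η in ρ..(2 * ε), f η ≤ ω (2 * ε) := by
    calc ρ * ∫ η in ρ..(2 * ε), f η ≤ ρ * (ω (2 * ε) / ρ) :=
          mul_le_mul_of_nonneg_left step1 (le_of_lt hρ)
      _ = ω (2 * ε) := by field_simp
  have hB : ρ * ∫ η in (2 * ε)..(2 * d), f η ≤ 2 * ε * ∫ η in (2 * ε)..(2 * d), f η :=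
    mul_le_mul_of_nonneg_right hρε hInonneg
  nlinarith [step2]
end

section
/- Let σ ≥ 1, let μ : (0,∞) → ℝ be a normal majorant of the class (σ,1) with μ(η) → 0 as η → 0⁺, and let γ = {t ∈ ℂ : |t+1| = 1}. Then for every t ∈ γ the function η ↦ 8·μ(η)·[((Re t)² − (Im t)²)(η⁴ + |t|⁴) − 2η²|t|⁴]/|η² − t²|⁴ · η is integrable on (0,1), and the function g : γ → ℝ defined by g(t) = 8·∫₀¹ μ(η)·[((Re t)² − (Im t)²)(η⁴ + |t|⁴) − 2η²|t|⁴]/|η² − t²|⁴ · η dη is continuous on γ. -/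
/-!
Write the integrand as `μ(η) k(t, η) η`. The only real points of `γ` are `0` and `-2`, so for
`t ≠ 0` on `γ` the denominator `|η² - t²|` does not vanish for `η ∈ [0, 1]`; there `k` is jointly
continuous, hence bounded on a compact neighbourhood of `{t} × [0, 1]`, and since the monotone `μ`
is integrable, dominated convergence gives continuity at `t`.

At `t = 0` the integral vanishes. For small `t ∈ γ` we have `|Re t| ≤ |Im t|`, whence
`|η² - t²|² ≥ η⁴ + |t|⁴` and `|k(t, η)| ≤ 2|t|² / (η⁴ + |t|⁴)`; with the majorant bound
`μ(η) ≤ σ μ(|t|) (1 + η/|t|)` this dominates the integrand by `6σ μ(|t|) |t| / (|t|² + η²)`,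
whose integral over `[0, 1]` is at most `3πσ μ(|t|) → 0`.
-/

open Set MeasureTheory intervalIntegral Filter Topology Real

theorem nonneg_of_monotoneOn_Ioi_of_tendsto {f : ℝ → ℝ} (hmono : MonotoneOn f (Ioi 0))
    (hf : Tendsto f (𝓝[>] 0) (𝓝 0)) {x : ℝ} (hx : 0 < x) : 0 ≤ f x :=
  le_of_tendsto hf <| mem_of_superset (Ioo_mem_nhdsGT hx) fun _ hy =>
    hmono hy.1 hx hy.2.le

theorem intervalIntegrable_of_monotoneOn_Ioi {f : ℝ → ℝ} (hmono : MonotoneOn f (Ioi 0))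
    (hnonneg : ∀ x, 0 < x → 0 ≤ f x) {b : ℝ} (hb : 0 ≤ b) : IntervalIntegrable f volume 0 b := by
  have hind : MonotoneOn ((Ioi 0).indicator f) (uIcc 0 b) := by
    intro x hx y _ hxy
    rcases (uIcc_of_le hb ▸ hx).1.eq_or_lt with rfl | hx0
    · rw [indicator_of_notMem self_notMem_Ioi]
      exact indicator_nonneg hnonneg y
    · rw [indicator_of_mem (mem_Ioi.2 hx0), indicator_of_mem (mem_Ioi.2 (hx0.trans_le hxy))]
      exact hmono hx0 (hx0.trans_le hxy) hxy
  refine (intervalIntegrable_congr_uIoo ?_).2 hind.intervalIntegrable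
  intro x hx
  rw [uIoo_of_le hb] at hx
  exact (indicator_of_mem (mem_Ioi.2 hx.1) f).symm

theorem two_mul_add_mul_div_le {r η : ℝ} (hr : 0 < r) (hη : 0 ≤ η) :
    2 * r * (r + η) * η / (η ^ 4 + r ^ 4) ≤ 6 * (r / (r ^ 2 + η ^ 2)) := by
  rw [mul_div_assoc', div_le_div_iff₀ (by positivity) (by positivity)]
  have hquad : 0 ≤ η ^ 2 + η * r + r ^ 2 := by positivity
  nlinarith [mul_nonneg hr.le (mul_nonneg (sq_nonneg (η - r)) hquad),
    mul_nonneg hr.le (sq_nonneg (η ^ 2 - r ^ 2)), mul_nonneg hr.le (sq_nonneg (η ^ 2)),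
    mul_nonneg hr.le (sq_nonneg (r ^ 2))]

theorem continuousOn_intervalIntegral_mul_of_continuousOn {X : Type*} [TopologicalSpace X]
    [FirstCountableTopology X] {s : Set X} (hs : IsCompact s) {f : ℝ → ℝ} {a b : ℝ}
    (hf : IntervalIntegrable f volume a b) {k : X → ℝ → ℝ}
    (hk : ContinuousOn (fun p : X × ℝ => k p.1 p.2) (s ×ˢ uIcc a b)) :
    ContinuousOn (fun x => ∫ t in a..b, f t * k x t) s := by
  obtain ⟨M, hM⟩ := (hs.prod isCompact_uIcc).exists_bound_of_continuousOn hk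
  have hk_slice : ∀ x ∈ s, ContinuousOn (k x) (uIcc a b) := fun x hx =>
    hk.comp (continuousOn_const.prodMk continuousOn_id) fun t ht => ⟨hx, ht⟩
  intro x₀ hx₀
  refine continuousWithinAt_of_dominated_interval (bound := fun t => ‖f t‖ * M) ?_ ?_
    (hf.norm.mul_const M) (ae_of_all _ fun t ht => ?_)
  · filter_upwards [self_mem_nhdsWithin] with x hx
    exact hf.def'.aestronglyMeasurable.mul
      (((hk_slice x hx).mono uIoc_subset_uIcc).aestronglyMeasurable measurableSet_uIoc)
  · filter_upwards [self_mem_nhdsWithin] with x hx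
    refine ae_of_all _ fun t ht => ?_
    rw [norm_mul]
    exact mul_le_mul_of_nonneg_left (hM (x, t) ⟨hx, uIoc_subset_uIcc ht⟩) (norm_nonneg _)
  · exact continuousWithinAt_const.mul <|
      (hk (x₀, t) ⟨hx₀, uIoc_subset_uIcc ht⟩).comp (f := fun x => (x, t))
        (continuousWithinAt_id.prodMk continuousWithinAt_const)
        fun x hx => ⟨hx, uIoc_subset_uIcc ht⟩

noncomputable def circleKernel (t : ℂ) (η : ℝ) : ℝ :=
  ((t.re ^ 2 - t.im ^ 2) * (η ^ 4 + ‖t‖ ^ 4) - 2 * η ^ 2 * ‖t‖ ^ 4) /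
    ‖(η : ℂ) ^ 2 - t ^ 2‖ ^ 4

theorem sq_norm_eq_re_sq_add_im_sq (t : ℂ) : ‖t‖ ^ 2 = t.re ^ 2 + t.im ^ 2 := by
  rw [Complex.sq_norm, Complex.normSq_apply]; ring

theorem sq_norm_ofReal_sq_sub_sq (t : ℂ) (η : ℝ) :
    ‖(η : ℂ) ^ 2 - t ^ 2‖ ^ 2 = η ^ 4 - 2 * η ^ 2 * (t.re ^ 2 - t.im ^ 2) + ‖t‖ ^ 4 := by
  rw [show ‖t‖ ^ 4 = (‖t‖ ^ 2) ^ 2 by ring, sq_norm_eq_re_sq_add_im_sq, Complex.sq_norm,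
    Complex.normSq_apply]
  simp only [sq, Complex.sub_re, Complex.sub_im, Complex.mul_re, Complex.mul_im,
    Complex.ofReal_re, Complex.ofReal_im]
  ring

theorem abs_circleKernel_numerator_le (t : ℂ) (η : ℝ) :
    |(t.re ^ 2 - t.im ^ 2) * (η ^ 4 + ‖t‖ ^ 4) - 2 * η ^ 2 * ‖t‖ ^ 4|
      ≤ 2 * ‖t‖ ^ 2 * (η ^ 4 + ‖t‖ ^ 4) := by
  have hre_im : |t.re ^ 2 - t.im ^ 2| ≤ ‖t‖ ^ 2 := by
    rw [sq_norm_eq_re_sq_add_im_sq, abs_le]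
    constructor <;> nlinarith [sq_nonneg t.re, sq_nonneg t.im]
  have hamgm : 2 * η ^ 2 * ‖t‖ ^ 2 ≤ η ^ 4 + ‖t‖ ^ 4 := by nlinarith [sq_nonneg (η ^ 2 - ‖t‖ ^ 2)]
  calc _ ≤ |t.re ^ 2 - t.im ^ 2| * (η ^ 4 + ‖t‖ ^ 4) + 2 * η ^ 2 * ‖t‖ ^ 4 := by
        refine (abs_sub _ _).trans_eq ?_
        rw [abs_mul, abs_of_nonneg (a := η ^ 4 + ‖t‖ ^ 4) (by positivity),
          abs_of_nonneg (a := 2 * η ^ 2 * ‖t‖ ^ 4) (by positivity)]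
    _ ≤ ‖t‖ ^ 2 * (η ^ 4 + ‖t‖ ^ 4) + ‖t‖ ^ 2 * (η ^ 4 + ‖t‖ ^ 4) := by
        gcongr ?_ * _ + ?_
        linarith [mul_le_mul_of_nonneg_left hamgm (sq_nonneg ‖t‖)]
    _ = 2 * ‖t‖ ^ 2 * (η ^ 4 + ‖t‖ ^ 4) := by ring

theorem abs_circleKernel_le {t : ℂ} (ht : t.re ^ 2 ≤ t.im ^ 2) (ht0 : t ≠ 0) (η : ℝ) :
    |circleKernel t η| ≤ 2 * ‖t‖ ^ 2 / (η ^ 4 + ‖t‖ ^ 4) := by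
  have hpos : 0 < η ^ 4 + ‖t‖ ^ 4 := by have := norm_pos_iff.2 ht0; positivity
  have hden : (η ^ 4 + ‖t‖ ^ 4) ^ 2 ≤ ‖(η : ℂ) ^ 2 - t ^ 2‖ ^ 4 := by
    rw [show ‖(η : ℂ) ^ 2 - t ^ 2‖ ^ 4 = (‖(η : ℂ) ^ 2 - t ^ 2‖ ^ 2) ^ 2 by ring,
      sq_norm_ofReal_sq_sub_sq]
    gcongr
    nlinarith [sq_nonneg η]
  rw [circleKernel, abs_div, abs_of_nonneg (pow_nonneg (norm_nonneg _) 4)]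
  calc _ ≤ 2 * ‖t‖ ^ 2 * (η ^ 4 + ‖t‖ ^ 4) / (η ^ 4 + ‖t‖ ^ 4) ^ 2 :=
        div_le_div₀ (by positivity) (abs_circleKernel_numerator_le t η) (by positivity) hden
    _ = 2 * ‖t‖ ^ 2 / (η ^ 4 + ‖t‖ ^ 4) := by field_simp

theorem circleKernel_zero_left : circleKernel 0 = 0 := by
  funext η; simp [circleKernel]

theorem continuousAt_circleKernel {t : ℂ} {η : ℝ} (h : (η : ℂ) ^ 2 - t ^ 2 ≠ 0) :
    ContinuousAt (fun p : ℂ × ℝ => circleKernel p.1 p.2) (t, η) := by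
  unfold circleKernel
  exact ContinuousAt.div (by fun_prop) (by fun_prop) (pow_ne_zero _ (norm_ne_zero_iff.2 h))

theorem re_sq_le_im_sq_of_norm_add_one_eq_one {t : ℂ} (ht : ‖t + 1‖ = 1) (ht1 : ‖t‖ ≤ 1) :
    t.re ^ 2 ≤ t.im ^ 2 := by
  have hcircle : (t.re + 1) ^ 2 + t.im ^ 2 = 1 := by
    simpa [ht] using (sq_norm_eq_re_sq_add_im_sq (t + 1)).symm
  have hdisc : t.re ^ 2 + t.im ^ 2 ≤ 1 := by
    rw [← sq_norm_eq_re_sq_add_im_sq]; nlinarith [norm_nonneg t]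
  nlinarith

theorem ofReal_sq_sub_sq_ne_zero {t : ℂ} (ht : ‖t + 1‖ = 1) (ht0 : t ≠ 0) {η : ℝ}
    (hη : η ∈ Icc (0 : ℝ) 1) : (η : ℂ) ^ 2 - t ^ 2 ≠ 0 := by
  intro h
  have hη0 : η ≠ 0 := by rintro rfl; simp_all
  rcases sq_eq_sq_iff_eq_or_eq_neg.1 (sub_eq_zero.1 h).symm with rfl | rfl
  · rw [← Complex.ofReal_one, ← Complex.ofReal_add, Complex.norm_real, Real.norm_eq_abs,
      abs_of_nonneg (by linarith [hη.1])] at ht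
    exact hη0 (by linarith)
  · rw [← Complex.ofReal_neg, ← Complex.ofReal_one, ← Complex.ofReal_add, Complex.norm_real,
      Real.norm_eq_abs, abs_of_nonneg (by linarith [hη.2])] at ht
    exact hη0 (by linarith)

theorem continuousOn_circleKernel {t : ℂ} (ht : ‖t + 1‖ = 1) :
    ContinuousOn (circleKernel t) (Icc 0 1) := by
  rcases eq_or_ne t 0 with rfl | ht0
  · rw [circleKernel_zero_left]; exact continuousOn_const
  · exact fun η hη => ((continuousAt_circleKernel (ofReal_sq_sub_sq_ne_zero ht ht0 hη)).comp
      (f := fun η => (t, η)) (by fun_prop)).continuousWithinAt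

theorem intervalIntegrable_mul_circleKernel_mul {μ : ℝ → ℝ}
    (hμ : IntervalIntegrable μ volume 0 1) {t : ℂ} (ht : ‖t + 1‖ = 1) :
    IntervalIntegrable (fun η => μ η * circleKernel t η * η) volume 0 1 := by
  simp only [mul_assoc]
  refine hμ.mul_continuousOn ?_
  rw [uIcc_of_le zero_le_one]
  exact (continuousOn_circleKernel ht).mul continuousOn_id

theorem continuousWithinAt_integral_mul_circleKernel_mul {μ : ℝ → ℝ}
    (hμ : IntervalIntegrable μ volume 0 1) {t₀ : ℂ} (ht₀ : ‖t₀ + 1‖ = 1) (ht₀0 : t₀ ≠ 0) :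
    ContinuousWithinAt (fun t : ℂ => ∫ η in (0 : ℝ)..1, μ η * circleKernel t η * η)
      {t : ℂ | ‖t + 1‖ = 1} t₀ := by
  set K := {t : ℂ | ‖t + 1‖ = 1} ∩ Metric.closedBall t₀ (‖t₀‖ / 2)
  have hK : IsCompact K := (isCompact_closedBall _ _).inter_left
    (isClosed_eq (by fun_prop) continuous_const)
  have hK0 : ∀ t ∈ K, t ≠ 0 := by
    rintro t ⟨-, ht⟩ rfl
    rw [Metric.mem_closedBall, dist_zero_left] at ht
    linarith [norm_pos_iff.2 ht₀0]
  have hcont : ContinuousOn (fun p : ℂ × ℝ => circleKernel p.1 p.2 * p.2) (K ×ˢ uIcc 0 1) := by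
    rintro ⟨t, η⟩ ⟨htK, hη⟩
    rw [uIcc_of_le zero_le_one] at hη
    exact ((continuousAt_circleKernel (ofReal_sq_sub_sq_ne_zero htK.1 (hK0 t htK) hη)).mul
      continuousAt_snd).continuousWithinAt
  simp only [mul_assoc]
  exact (continuousOn_intervalIntegral_mul_of_continuousOn hK hμ hcont t₀
    ⟨ht₀, Metric.mem_closedBall_self (by positivity)⟩).mono_of_mem_nhdsWithin
    (inter_mem_nhdsWithin _ (Metric.closedBall_mem_nhds _ (by positivity)))

section Majorant

variable {σ : ℝ} {μ : ℝ → ℝ}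

theorem le_mul_one_add_div_of_majorant (hσ : 1 ≤ σ) (hmono : MonotoneOn μ (Ioi 0))
    (hnm : ∀ lam η : ℝ, 1 < lam → 0 < η → μ (lam * η) ≤ σ * lam * μ η)
    {r η : ℝ} (hr : 0 < r) (hμr : 0 ≤ μ r) (hη : 0 < η) :
    μ η ≤ σ * μ r * (1 + η / r) := by
  have hηr : 0 ≤ η / r := by positivity
  rcases le_or_gt η r with h | h
  · calc μ η ≤ μ r := hmono hη hr h
      _ ≤ σ * μ r * (1 + η / r) := by nlinarith [mul_nonneg hμr hηr]
  · calc μ η = μ (η / r * r) := by rw [div_mul_cancel₀ _ hr.ne']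
      _ ≤ σ * (η / r) * μ r := hnm _ r ((one_lt_div hr).2 h) hr
      _ ≤ σ * μ r * (1 + η / r) := by nlinarith [mul_nonneg hμr hηr]

theorem norm_mul_circleKernel_mul_le (hσ : 1 ≤ σ) (hmono : MonotoneOn μ (Ioi 0))
    (hnm : ∀ lam η : ℝ, 1 < lam → 0 < η → μ (lam * η) ≤ σ * lam * μ η)
    (hnonneg : ∀ η, 0 < η → 0 ≤ μ η) {t : ℂ} (ht : t.re ^ 2 ≤ t.im ^ 2) (ht0 : t ≠ 0)
    {η : ℝ} (hη : 0 < η) :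
    ‖μ η * circleKernel t η * η‖ ≤ 6 * σ * μ ‖t‖ * (‖t‖ / (‖t‖ ^ 2 + η ^ 2)) := by
  set r := ‖t‖
  have hr : 0 < r := norm_pos_iff.2 ht0
  have hμr := hnonneg r hr
  rw [norm_mul, norm_mul, Real.norm_of_nonneg (hnonneg η hη), Real.norm_of_nonneg hη.le,
    Real.norm_eq_abs]
  calc μ η * |circleKernel t η| * η
      ≤ σ * μ r * (1 + η / r) * (2 * r ^ 2 / (η ^ 4 + r ^ 4)) * η := by
        gcongr
        · exact le_mul_one_add_div_of_majorant hσ hmono hnm hr hμr hη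
        · exact abs_circleKernel_le ht ht0 η
    _ = σ * μ r * (2 * r * (r + η) * η / (η ^ 4 + r ^ 4)) := by field_simp
    _ ≤ σ * μ r * (6 * (r / (r ^ 2 + η ^ 2))) := by
        gcongr; exact two_mul_add_mul_div_le hr hη.le
    _ = 6 * σ * μ r * (r / (r ^ 2 + η ^ 2)) := by ring

theorem norm_integral_mul_circleKernel_mul_le (hσ : 1 ≤ σ) (hmono : MonotoneOn μ (Ioi 0))
    (hnm : ∀ lam η : ℝ, 1 < lam → 0 < η → μ (lam * η) ≤ σ * lam * μ η)
    (hnonneg : ∀ η, 0 < η → 0 ≤ μ η) {t : ℂ} (ht : t.re ^ 2 ≤ t.im ^ 2) (ht0 : t ≠ 0) :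
    ‖∫ η in (0 : ℝ)..1, μ η * circleKernel t η * η‖ ≤ 3 * π * σ * μ ‖t‖ := by
  set r := ‖t‖
  have hr : 0 < r := norm_pos_iff.2 ht0
  have hμr := hnonneg r hr
  calc _ ≤ ∫ η in (0 : ℝ)..1, 6 * σ * μ r * (r / (r ^ 2 + η ^ 2)) :=
        norm_integral_le_of_norm_le zero_le_one
          (ae_of_all _ fun η hη => norm_mul_circleKernel_mul_le hσ hmono hnm hnonneg ht ht0 hη.1)
          (Continuous.intervalIntegrable (by fun_prop (disch := exact fun x => by positivity)) _ _)
    _ = 6 * σ * μ r * arctan (1 / r) := by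
        rw [intervalIntegral.integral_const_mul, integral_div_sq_add_sq, zero_div, arctan_zero,
          sub_zero]
    _ ≤ 6 * σ * μ r * (π / 2) := by
        gcongr
        exact (arctan_lt_pi_div_two _).le
    _ = 3 * π * σ * μ r := by ring

theorem continuousWithinAt_integral_mul_circleKernel_mul_zero (hσ : 1 ≤ σ)
    (hmono : MonotoneOn μ (Ioi 0))
    (hnm : ∀ lam η : ℝ, 1 < lam → 0 < η → μ (lam * η) ≤ σ * lam * μ η)
    (hμ0 : Tendsto μ (𝓝[>] 0) (𝓝 0)) :
    ContinuousWithinAt (fun t : ℂ => ∫ η in (0 : ℝ)..1, μ η * circleKernel t η * η)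
      {t : ℂ | ‖t + 1‖ = 1} 0 := by
  have hnonneg : ∀ η, 0 < η → 0 ≤ μ η := fun η => nonneg_of_monotoneOn_Ioi_of_tendsto hmono hμ0
  have hnorm : Tendsto (fun t : ℂ => ‖t‖) (𝓝[{t : ℂ | ‖t + 1‖ = 1} \ {0}] 0) (𝓝[>] 0) :=
    tendsto_nhdsWithin_iff.2 ⟨(continuous_norm.tendsto' 0 0 norm_zero).mono_left
      nhdsWithin_le_nhds, eventually_nhdsWithin_of_forall fun t ht => norm_pos_iff.2 ht.2⟩
  rw [← continuousWithinAt_sdiff_self, ContinuousWithinAt, circleKernel_zero_left]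
  simp only [Pi.zero_apply, mul_zero, zero_mul, intervalIntegral.integral_zero]
  refine squeeze_zero_norm' ?_ (by simpa using (hμ0.comp hnorm).const_mul (3 * π * σ))
  filter_upwards [self_mem_nhdsWithin,
    mem_nhdsWithin_of_mem_nhds (Metric.closedBall_mem_nhds (0 : ℂ) one_pos)] with t ht ht1
  refine norm_integral_mul_circleKernel_mul_le hσ hmono hnm hnonneg
    (re_sq_le_im_sq_of_norm_add_one_eq_one ht.1 ?_) ht.2
  simpa using ht1

end Majorant

/-- For a normal majorant `μ` of class `(σ,1)` with `μ(0⁺) = 0` and the circle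
`γ = {t : |t+1| = 1}`, for each `t ∈ γ` the function
`η ↦ 8·μ(η)·[((Re t)² − (Im t)²)(η⁴ + |t|⁴) − 2η²|t|⁴]/|η² − t²|⁴ · η`
is integrable on `(0,1)`, and the function `g(t) = 8·∫₀¹ ⋯ dη` is continuous on `γ`. -/
theorem gFun_integrable_and_continuous
    (σ : ℝ) (hσ : 1 ≤ σ) (μ : ℝ → ℝ)
    (hμ_mono : ∀ x y : ℝ, 0 < x → x ≤ y → μ x ≤ μ y)
    (hμ_nm : ∀ lam η : ℝ, 1 < lam → 0 < η → μ (lam * η) ≤ σ * lam * μ η)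
    (hμ0 : Filter.Tendsto μ (nhdsWithin 0 (Set.Ioi 0)) (nhds 0)) :
    (∀ t ∈ {t : ℂ | ‖t + 1‖ = 1},
      IntervalIntegrable
        (fun η : ℝ => 8 * (μ η *
          (((t.re ^ 2 - t.im ^ 2) * (η ^ 4 + ‖t‖ ^ 4)
              - 2 * η ^ 2 * ‖t‖ ^ 4) /
            ‖(η : ℂ) ^ 2 - t ^ 2‖ ^ 4) * η))
        MeasureTheory.volume 0 1) ∧
    ContinuousOn
      (fun t : ℂ => 8 * ∫ η in (0 : ℝ)..1, μ η *
          (((t.re ^ 2 - t.im ^ 2) * (η ^ 4 + ‖t‖ ^ 4)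
              - 2 * η ^ 2 * ‖t‖ ^ 4) /
            ‖(η : ℂ) ^ 2 - t ^ 2‖ ^ 4) * η)
      {t : ℂ | ‖t + 1‖ = 1} := by
  have hmono : MonotoneOn μ (Ioi 0) := fun x hx y _ hxy => hμ_mono x y hx hxy
  have hint : IntervalIntegrable μ volume 0 1 := intervalIntegrable_of_monotoneOn_Ioi hmono
    (fun _ => nonneg_of_monotoneOn_Ioi_of_tendsto hmono hμ0) zero_le_one
  refine ⟨fun t ht => (intervalIntegrable_mul_circleKernel_mul hint ht).const_mul 8,
    fun t ht => continuousWithinAt_const.mul ?_⟩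
  rcases eq_or_ne t 0 with rfl | ht0
  · exact continuousWithinAt_integral_mul_circleKernel_mul_zero hσ hmono hμ_nm hμ0
  · exact continuousWithinAt_integral_mul_circleKernel_mul hint ht ht0
end
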